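/- Let s be an even integer with 2-adic valuation ν = ν₂(s) ≥ 1, and let l be a positive integer. If l ≤ ν then the sequence m ↦ F_m(s) (mod 2^l) is periodic of period 2, and if l > ν then it is periodic of period 2^{l+1-ν}. -/

import Mathlib

open Polynomial

noncomputable def fibPoly : ℕ → Polynomial ℤ
  | 0 => 0
  | 1 => 1
  | n + 2 => X * fibPoly (n + 1) + fibPoly n

/-!
With `Q x = !![x, 1; 1, 0]` one has `Q x ^ (n + 1) = !![F_{n+2}, F_{n+1}; F_{n+1}, F_n]`, so
`m ↦ F_m(s) mod N` has period `p` exactly when `Q s ^ p = 1` in `ZMod N`, and the minimal period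
is the order of `Q s`. If `2 ^ l ∣ s` then `Q s ≡ !![0, 1; 1, 0]` has order 2. Otherwise write
`s = 2 ^ ν * u` with `u` odd; the doubling formulas `F_{2n} = F_n (2 F_{n+1} - s F_n)` and
`F_{2n+1} = F_{n+1}^2 + F_n^2` show by induction that `F_{2^(e+1)}(s)` has 2-adic valuation
exactly `ν + e` while `F_{2^(e+1)+1}(s) ≡ 1 mod 2 ^ (ν + e)`, so the order of `Q s` modulo
`2 ^ (ν + e + 1)` is `2 ^ (e + 2)`.
-/

@[simp] lemma fibPoly_zero : fibPoly 0 = 0 := by rw [fibPoly]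

@[simp] lemma fibPoly_one : fibPoly 1 = 1 := by rw [fibPoly]

lemma fibPoly_add_two (n : ℕ) : fibPoly (n + 2) = X * fibPoly (n + 1) + fibPoly n := by
  rw [fibPoly]

section CommRing

variable {R : Type*} [CommRing R]

lemma aeval_fibPoly_add_two (x : R) (n : ℕ) :
    aeval x (fibPoly (n + 2)) = x * aeval x (fibPoly (n + 1)) + aeval x (fibPoly n) := by
  simp [fibPoly_add_two]

lemma intCast_eval_fibPoly (s : ℤ) (n : ℕ) :
    (((fibPoly n).eval s : ℤ) : R) = aeval (s : R) (fibPoly n) := by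
  rw [aeval_def, eval₂_eq_eval_map, algebraMap_int_eq, eval_intCast_map, eq_intCast, Int.cast_id]

noncomputable def fibMatrix (x : R) : Matrix (Fin 2) (Fin 2) R := !![x, 1; 1, 0]

lemma fibMatrix_pow_succ (x : R) (n : ℕ) :
    fibMatrix x ^ (n + 1) =
      !![aeval x (fibPoly (n + 2)), aeval x (fibPoly (n + 1));
        aeval x (fibPoly (n + 1)), aeval x (fibPoly n)] := by
  induction n with
  | zero => simp [fibMatrix, fibPoly_add_two]
  | succ n ih =>
    rw [pow_succ, ih, fibMatrix, Matrix.mul_fin_two, aeval_fibPoly_add_two x (n + 1),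
      aeval_fibPoly_add_two x n]
    simp only [mul_one, mul_zero, add_zero, mul_comm x]

lemma aeval_fibPoly_two_mul_add_one (x : R) (n : ℕ) :
    aeval x (fibPoly (2 * n + 1)) = aeval x (fibPoly (n + 1)) ^ 2 + aeval x (fibPoly n) ^ 2 := by
  have h := congrArg (· 1 1) (pow_add (fibMatrix x) (n + 1) (n + 1))
  rw [show n + 1 + (n + 1) = 2 * n + 1 + 1 by ring] at h
  simpa [fibMatrix_pow_succ, Matrix.mul_fin_two, sq] using h

lemma aeval_fibPoly_two_mul (x : R) (n : ℕ) :
    aeval x (fibPoly (2 * n)) =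
      aeval x (fibPoly n) * (2 * aeval x (fibPoly (n + 1)) - x * aeval x (fibPoly n)) := by
  cases n with
  | zero => simp
  | succ n =>
    have h := congrArg (· 0 1) (pow_add (fibMatrix x) (n + 1) (n + 1))
    rw [show n + 1 + (n + 1) = 2 * n + 1 + 1 by ring] at h
    simp only [fibMatrix_pow_succ, Matrix.mul_fin_two] at h
    simp only [Matrix.of_apply, Matrix.cons_val', Matrix.cons_val_one, Matrix.cons_val_fin_one,
      Matrix.cons_val_zero] at h
    rw [show 2 * (n + 1) = 2 * n + 2 by ring, h, aeval_fibPoly_add_two x n]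
    ring

lemma fibMatrix_pow_eq_one_iff (x : R) (p : ℕ) :
    fibMatrix x ^ p = 1 ↔ aeval x (fibPoly p) = 0 ∧ aeval x (fibPoly (p + 1)) = 1 := by
  cases p with
  | zero => simp
  | succ k =>
    rw [fibMatrix_pow_succ, Matrix.one_fin_two, aeval_fibPoly_add_two]
    simp only [EmbeddingLike.apply_eq_iff_eq, Matrix.vecCons_inj, and_true]
    constructor
    · rintro ⟨⟨h2, h1⟩, -⟩
      exact ⟨h1, h2⟩
    · rintro ⟨h1, h2⟩
      rw [h1, mul_zero, zero_add] at h2 ⊢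
      exact ⟨⟨h2, rfl⟩, rfl, h2⟩

lemma periodic_aeval_fibPoly_iff (x : R) (p : ℕ) :
    Function.Periodic (fun m ↦ aeval x (fibPoly m)) p ↔ fibMatrix x ^ p = 1 := by
  refine ⟨fun h ↦ ?_, fun h m ↦ ?_⟩
  · rw [fibMatrix_pow_eq_one_iff]
    simpa [add_comm] using And.intro (h 0) (h 1)
  · have := congrArg (· 1 1) (pow_add (fibMatrix x) (m + 1) p)
    simp only [h, mul_one, add_right_comm m 1 p, fibMatrix_pow_succ] at this
    simpa using this

lemma orderOf_fibMatrix_zero [Nontrivial R] : orderOf (fibMatrix (0 : R)) = 2 := by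
  apply orderOf_eq_prime
  · simp [fibMatrix, sq, Matrix.one_fin_two]
  · intro h
    simpa [fibMatrix, Matrix.one_fin_two] using congrArg (· 0 1) h

end CommRing

lemma fibMatrix_intCast_pow_eq_one_iff (s : ℤ) (N p : ℕ) :
    fibMatrix (s : ZMod N) ^ p = 1 ↔
      (N : ℤ) ∣ (fibPoly p).eval s ∧ (fibPoly (p + 1)).eval s ≡ 1 [ZMOD N] := by
  rw [fibMatrix_pow_eq_one_iff, ← intCast_eval_fibPoly, ← intCast_eval_fibPoly,
    ZMod.intCast_zmod_eq_zero_iff_dvd, ← Int.cast_one, ZMod.intCast_eq_intCast_iff]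

lemma fibPoly_eval_modEq_iff (s : ℤ) (N p : ℕ) :
    (∀ m, (fibPoly (m + p)).eval s ≡ (fibPoly m).eval s [ZMOD N]) ↔
      fibMatrix (s : ZMod N) ^ p = 1 := by
  simp_rw [← ZMod.intCast_eq_intCast_iff, intCast_eval_fibPoly]
  exact periodic_aeval_fibPoly_iff _ p

lemma exists_odd_eq_two_pow_padicValInt_mul {s : ℤ} (hs : s ≠ 0) :
    ∃ u, Odd u ∧ s = 2 ^ padicValInt 2 s * u := by
  have hdvd := padicValInt_dvd (p := 2) s
  set v := padicValInt 2 s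
  obtain ⟨u, hu⟩ : (2 : ℤ) ^ v ∣ s := by exact_mod_cast hdvd
  refine ⟨u, Int.not_even_iff_odd.mp fun ⟨c, hc⟩ ↦ ?_, hu⟩
  have h : ((2 : ℕ) : ℤ) ^ (v + 1) ∣ s := ⟨c, by rw [hu, hc]; push_cast; ring⟩
  rw [padicValInt_dvd_iff] at h
  omega

-- `b`, `c` stand for `F_n(s)`, `F_{n+1}(s)`; the conclusions are about `F_{2n}(s)`, `F_{2n+1}(s)`.
lemma two_adic_doubling_step {s b c w : ℤ} {a : ℕ} (hs : Even s) (ha : a ≠ 0)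
    (hb : b = 2 ^ a * w) (hw : Odd w) (hc : c ≡ 1 [ZMOD 2 ^ a]) :
    (∃ w', Odd w' ∧ b * (2 * c - s * b) = 2 ^ (a + 1) * w') ∧
      c ^ 2 + b ^ 2 ≡ 1 [ZMOD 2 ^ (a + 1)] := by
  obtain ⟨t, rfl⟩ := hs
  obtain ⟨k, hk⟩ := Int.modEq_iff_dvd.mp hc.symm
  obtain ⟨a, rfl⟩ := Nat.exists_eq_add_one_of_ne_zero ha
  obtain rfl : c = 1 + 2 ^ (a + 1) * k := by linarith
  subst hb
  refine ⟨⟨w * (1 + 2 ^ (a + 1) * (k - t * w)), hw.mul ⟨2 ^ a * (k - t * w), by ring⟩, by ring⟩,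
    (Int.modEq_iff_dvd.mpr ⟨k + 2 ^ a * k ^ 2 + 2 ^ a * w ^ 2, by ring⟩).symm⟩

lemma fibPoly_eval_two_pow_succ {ν : ℕ} (hν : ν ≠ 0) {u : ℤ} (hu : Odd u) (e : ℕ) :
    (∃ w, Odd w ∧ (fibPoly (2 ^ (e + 1))).eval (2 ^ ν * u) = 2 ^ (ν + e) * w) ∧
      (fibPoly (2 ^ (e + 1) + 1)).eval (2 ^ ν * u) ≡ 1 [ZMOD 2 ^ (ν + e)] := by
  have hs : Even ((2 : ℤ) ^ ν * u) := (Int.even_pow.mpr ⟨even_two, hν⟩).mul_right u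
  induction e with
  | zero =>
    refine ⟨⟨u, hu, by simp [fibPoly_add_two]⟩, ?_⟩
    exact (Int.modEq_iff_dvd.mpr ⟨2 ^ ν * u ^ 2, by
      simp only [zero_add, pow_one, Nat.reduceAdd, fibPoly_add_two, fibPoly_one, fibPoly_zero,
        eval_add, eval_mul, eval_X, eval_one, eval_zero]
      ring⟩).symm
  | succ e ih =>
    obtain ⟨⟨w, hw, hb⟩, hc⟩ := ih
    have h := two_adic_doubling_step hs (by omega) hb hw hc
    rw [pow_succ', ← coe_aeval_eq_eval, aeval_fibPoly_two_mul, aeval_fibPoly_two_mul_add_one]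
    simp only [coe_aeval_eq_eval]
    exact h

lemma orderOf_fibMatrix_two_adic {ν : ℕ} (hν : ν ≠ 0) {u : ℤ} (hu : Odd u) (e : ℕ) :
    orderOf (fibMatrix ((2 ^ ν * u : ℤ) : ZMod (2 ^ (ν + e + 1)))) = 2 ^ (e + 2) := by
  apply orderOf_eq_prime_pow
  · rw [fibMatrix_intCast_pow_eq_one_iff]
    rintro ⟨hdvd, -⟩
    obtain ⟨⟨w, hw, hF⟩, -⟩ := fibPoly_eval_two_pow_succ hν hu e
    rw [hF, Nat.cast_pow, Nat.cast_ofNat, pow_succ, mul_dvd_mul_iff_left (by positivity)] at hdvd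
    exact Int.not_even_iff_odd.mpr hw (even_iff_two_dvd.mpr hdvd)
  · rw [fibMatrix_intCast_pow_eq_one_iff]
    obtain ⟨⟨w, -, hF⟩, hF1⟩ := fibPoly_eval_two_pow_succ hν hu (e + 1)
    push_cast
    exact ⟨⟨w, hF⟩, hF1⟩

lemma pow_eq_one_and_le_of_orderOf_eq {G : Type*} [Monoid G] {x : G} {n : ℕ}
    (h : orderOf x = n) : x ^ n = 1 ∧ ∀ p, 0 < p → x ^ p = 1 → n ≤ p :=
  h ▸ ⟨pow_orderOf_eq_one x, fun _ ↦ orderOf_le_of_pow_eq_one⟩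

theorem fibPoly_eval_even_periodic (s : ℤ) (hs0 : s ≠ 0) (ν : ℕ)
    (hν : ν = padicValInt 2 s) (hν1 : 1 ≤ ν) (l : ℕ) (hl : 1 ≤ l) :
    (l ≤ ν →
      (∀ m : ℕ, (fibPoly (m + 2)).eval s ≡ (fibPoly m).eval s [ZMOD (2 : ℤ) ^ l]) ∧
      (∀ p : ℕ, 0 < p →
        (∀ m : ℕ, (fibPoly (m + p)).eval s ≡ (fibPoly m).eval s [ZMOD (2 : ℤ) ^ l]) →
        2 ≤ p)) ∧
    (ν < l →
      (∀ m : ℕ, (fibPoly (m + 2 ^ (l + 1 - ν))).eval s ≡ (fibPoly m).eval s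
          [ZMOD (2 : ℤ) ^ l]) ∧
      (∀ p : ℕ, 0 < p →
        (∀ m : ℕ, (fibPoly (m + p)).eval s ≡ (fibPoly m).eval s [ZMOD (2 : ℤ) ^ l]) →
        2 ^ (l + 1 - ν) ≤ p)) := by
  obtain ⟨u, hu, hs⟩ := exists_odd_eq_two_pow_padicValInt_mul hs0
  rw [← hν] at hs
  subst hs
  have hcast : (2 : ℤ) ^ l = ((2 ^ l : ℕ) : ℤ) := by push_cast; rfl
  simp only [hcast, fibPoly_eval_modEq_iff]
  refine ⟨fun hlν ↦ ?_, fun hνl ↦ ?_⟩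
  · have : Fact (1 < 2 ^ l) := ⟨Nat.one_lt_two_pow (by omega)⟩
    have hzero : ((2 ^ ν * u : ℤ) : ZMod (2 ^ l)) = 0 := by
      rw [ZMod.intCast_zmod_eq_zero_iff_dvd]
      push_cast
      exact (pow_dvd_pow 2 hlν).mul_right u
    have h : orderOf (fibMatrix ((2 ^ ν * u : ℤ) : ZMod (2 ^ l))) = 2 :=
      hzero ▸ orderOf_fibMatrix_zero
    exact pow_eq_one_and_le_of_orderOf_eq h
  · obtain ⟨e, rfl⟩ : ∃ e, l = ν + e + 1 := ⟨l - ν - 1, by omega⟩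
    rw [show ν + e + 1 + 1 - ν = e + 2 by omega]
    have h := orderOf_fibMatrix_two_adic (Nat.one_le_iff_ne_zero.mp hν1) hu e
    exact pow_eq_one_and_le_of_orderOf_eq h
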